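/- Key step of Theorem 1: for any Hermitian H, H', unitary U, and β > 0, Tr(ω_H H) - Tr(U ω_H U† H') ≤ F(ω_H, H) - F(ω_{H'}, H'), where F(ρ,H) = Tr(ρH) - S(ρ)/β and ω_H is the Gibbs state of H. -/

import Mathlib

open Matrix BigOperators ComplexOrder

variable {n : Type*} [Fintype n] [DecidableEq n]

/-- Real part of the trace. -/
noncomputable def trR {m : Type*} [Fintype m] (A : Matrix m m ℂ) : ℝ := (Matrix.trace A).re

/-- The matrix `exp (-β H)`. -/
noncomputable def mexp {m : Type*} [Fintype m] [DecidableEq m] (β : ℝ) (H : Matrix m m ℂ) :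
    Matrix m m ℂ := NormedSpace.exp ((-β : ℂ) • H)

/-- The Gibbs state `exp (-β H) / Tr (exp (-β H))`. -/
noncomputable def gibbs {m : Type*} [Fintype m] [DecidableEq m] (β : ℝ) (H : Matrix m m ℂ) :
    Matrix m m ℂ := (Matrix.trace (mexp β H))⁻¹ • mexp β H

/-- Von Neumann entropy `-Tr (ρ log ρ)`, via the eigenvalues of a Hermitian matrix. -/
noncomputable def vnEntropy {m : Type*} [Fintype m] [DecidableEq m] {ρ : Matrix m m ℂ}
    (h : ρ.IsHermitian) : ℝ := -∑ i, h.eigenvalues i * Real.log (h.eigenvalues i)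

/-- Free energy `F(ρ,H) = Tr(ρH) - S(ρ)/β`. -/
noncomputable def freeEnergy {m : Type*} [Fintype m] [DecidableEq m] (β : ℝ)
    (ρ H : Matrix m m ℂ) (h : ρ.IsHermitian) : ℝ := trR (ρ * H) - vnEntropy h / β

/-- Matrix logarithm of a Hermitian matrix, via the spectral decomposition. -/
noncomputable def mlog {m : Type*} [Fintype m] [DecidableEq m] {A : Matrix m m ℂ}
    (h : A.IsHermitian) : Matrix m m ℂ :=
  (h.eigenvectorUnitary : Matrix m m ℂ) *
    Matrix.diagonal (fun i => (Real.log (h.eigenvalues i) : ℂ)) *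
      (star (h.eigenvectorUnitary : Matrix m m ℂ))

/-- Quantum relative entropy `D(ρ‖σ) = Tr(ρ log ρ) - Tr(ρ log σ)`. -/
noncomputable def relEnt {m : Type*} [Fintype m] [DecidableEq m] {ρ σ : Matrix m m ℂ}
    (hρ : ρ.IsHermitian) (hσ : σ.IsHermitian) : ℝ :=
  trR (ρ * mlog hρ) - trR (ρ * mlog hσ)

/-!
With `ρ = U ω_H U†`, the claim is `F(ω_{H'}, H') ≤ F(ρ, H')` once `Tr(ω_H H)` cancels and
`S(ρ) = S(ω_H)` is used. In eigenbases `ρ = W diag(p) W†` and `H' = V diag(e) V†` one has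
`Tr(ρ H') = ∑ᵢⱼ pᵢ eⱼ cᵢⱼ` with `cᵢⱼ = |(W†V)ᵢⱼ|²`, a doubly stochastic matrix. If `q` are the
Gibbs weights of `e` and `Z` their normalisation, then
`β F(ρ, H') + log Z = ∑ᵢⱼ cᵢⱼ pᵢ (log pᵢ - log qⱼ)`, which is nonnegative by `log x ≤ x - 1`,
while `β F(ω_{H'}, H') = -log Z`.
-/

open Real

lemma Real.sub_le_mul_log_sub_log {p q : ℝ} (hp : 0 ≤ p) (hq : 0 < q) :
    p - q ≤ p * (log p - log q) := by
  rcases hp.eq_or_lt with rfl | hp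
  · simpa using hq.le
  · have h := log_le_sub_one_of_pos (div_pos hq hp)
    rw [log_div hq.ne' hp.ne', div_sub_one hp.ne', le_div_iff₀ hp] at h
    linarith

section GibbsVariational

variable {n : Type*} [Fintype n]

lemma sum_sum_mul_log_sub_log_nonneg [DecidableEq n] {p q : n → ℝ} {c : Matrix n n ℝ}
    (hc : c ∈ doublyStochastic ℝ n) (hp : ∀ i, 0 ≤ p i) (hq : ∀ j, 0 < q j)
    (hpq : ∑ i, p i = ∑ j, q j) :
    0 ≤ ∑ i, ∑ j, c i j * (p i * (log (p i) - log (q j))) := by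
  have hzero : ∑ i, ∑ j, c i j * (p i - q j) = 0 := by
    simp only [mul_sub, Finset.sum_sub_distrib, ← Finset.sum_mul,
      sum_row_of_mem_doublyStochastic hc, one_mul]
    rw [Finset.sum_comm]
    simp only [← Finset.sum_mul, sum_col_of_mem_doublyStochastic hc, one_mul, hpq, sub_self]
  rw [← hzero]
  gcongr with i _ j _
  · exact nonneg_of_mem_doublyStochastic hc
  · exact sub_le_mul_log_sub_log (hp i) (hq j)

noncomputable def gibbsWeights (β : ℝ) (e : n → ℝ) (i : n) : ℝ :=
  exp (-β * e i) / ∑ j, exp (-β * e j)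

variable [Nonempty n]

lemma sum_exp_pos (β : ℝ) (e : n → ℝ) : 0 < ∑ j, exp (-β * e j) :=
  Finset.sum_pos (fun _ _ => exp_pos _) Finset.univ_nonempty

lemma gibbsWeights_pos (β : ℝ) (e : n → ℝ) (i : n) : 0 < gibbsWeights β e i :=
  div_pos (exp_pos _) (sum_exp_pos β e)

lemma sum_gibbsWeights (β : ℝ) (e : n → ℝ) : ∑ i, gibbsWeights β e i = 1 := by
  simp only [gibbsWeights, ← Finset.sum_div, div_self (sum_exp_pos β e).ne']

lemma log_gibbsWeights (β : ℝ) (e : n → ℝ) (i : n) :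
    log (gibbsWeights β e i) = -β * e i - log (∑ j, exp (-β * e j)) := by
  rw [gibbsWeights, log_div (exp_pos _).ne' (sum_exp_pos β e).ne', log_exp]

lemma sum_gibbsWeights_mul_add_sum_mul_log_div {β : ℝ} (hβ : β ≠ 0) (e : n → ℝ) :
    ∑ j, gibbsWeights β e j * e j + (∑ j, gibbsWeights β e j * log (gibbsWeights β e j)) / β =
      -log (∑ j, exp (-β * e j)) / β := by
  have hent : ∑ j, gibbsWeights β e j * log (gibbsWeights β e j) =
      -β * ∑ j, gibbsWeights β e j * e j - log (∑ j, exp (-β * e j)) := by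
    simp only [log_gibbsWeights, mul_sub, Finset.sum_sub_distrib, ← Finset.sum_mul,
      sum_gibbsWeights, one_mul, Finset.mul_sum]
    congr 1
    exact Finset.sum_congr rfl fun j _ => by ring
  rw [hent]
  field_simp
  ring

lemma neg_log_sum_exp_div_le [DecidableEq n] {β : ℝ} (hβ : 0 < β) (e : n → ℝ) {p : n → ℝ}
    (hp : ∀ i, 0 ≤ p i) (hp1 : ∑ i, p i = 1) {c : Matrix n n ℝ} (hc : c ∈ doublyStochastic ℝ n) :
    -log (∑ j, exp (-β * e j)) / β ≤
      ∑ i, ∑ j, p i * e j * c i j + (∑ i, p i * log (p i)) / β := by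
  set Z := ∑ j, exp (-β * e j)
  have hrow (i : n) : ∑ j, c i j * (p i * (log (p i) - log (gibbsWeights β e j))) =
      β * ∑ j, p i * e j * c i j + p i * log (p i) + log Z * p i := by
    calc _ = ∑ j, (c i j * (p i * log (p i) + log Z * p i) + β * (p i * e j * c i j)) :=
          Finset.sum_congr rfl fun j _ => by rw [log_gibbsWeights]; ring
      _ = _ := by
        rw [Finset.sum_add_distrib, ← Finset.sum_mul, ← Finset.mul_sum,
          sum_row_of_mem_doublyStochastic hc, one_mul]
        ring
  have hklein : 0 ≤ β * ∑ i, ∑ j, p i * e j * c i j + ∑ i, p i * log (p i) + log Z := by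
    have := sum_sum_mul_log_sub_log_nonneg hc hp (gibbsWeights_pos β e)
      (hp1.trans (sum_gibbsWeights β e).symm)
    simpa only [hrow, Finset.sum_add_distrib, ← Finset.mul_sum, hp1, mul_one] using this
  have hdiv : (β * ∑ i, ∑ j, p i * e j * c i j + ∑ i, p i * log (p i) + log Z) / β =
      ∑ i, ∑ j, p i * e j * c i j + (∑ i, p i * log (p i)) / β - -log Z / β := by
    field_simp
    ring
  linarith [hdiv ▸ div_nonneg hklein hβ.le]

end GibbsVariational

namespace Matrix

variable {n : Type*} [Fintype n] [DecidableEq n]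

lemma sum_normSq_of_mem_unitaryGroup {M : Matrix n n ℂ} (hM : M ∈ unitaryGroup n ℂ) (i : n) :
    ∑ j, Complex.normSq (M i j) = 1 := by
  have h : (M * star M) i i = ((∑ j, Complex.normSq (M i j) : ℝ) : ℂ) := by
    simp [mul_apply, Complex.mul_conj]
  rw [hM.2, one_apply_eq] at h
  exact_mod_cast h.symm

lemma map_normSq_mem_doublyStochastic {M : Matrix n n ℂ} (hM : M ∈ unitaryGroup n ℂ) :
    M.map Complex.normSq ∈ doublyStochastic ℝ n := by
  refine mem_doublyStochastic_iff_sum.2 ⟨fun i j => Complex.normSq_nonneg _,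
    sum_normSq_of_mem_unitaryGroup hM, fun j => ?_⟩
  simpa using sum_normSq_of_mem_unitaryGroup (Unitary.star_mem hM) j

lemma trace_conj_diagonal {V : Matrix n n ℂ} (hV : V ∈ unitaryGroup n ℂ) (v : n → ℂ) :
    trace (V * diagonal v * star V) = ∑ i, v i := by
  rw [trace_mul_cycle, hV.1, Matrix.one_mul, trace_diagonal]

lemma trace_conj_diagonal_mul_conj_diagonal {P Q : Matrix n n ℂ} (hP : P ∈ unitaryGroup n ℂ)
    (a b : n → ℝ) :
    trace ((P * diagonal (fun i => (a i : ℂ)) * star P) *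
      (Q * diagonal (fun j => (b j : ℂ)) * star Q)) =
      ((∑ i, ∑ j, a i * b j * Complex.normSq ((star P * Q) i j) : ℝ) : ℂ) := by
  set N := star P * Q
  have hcycle : (P * diagonal (fun i => (a i : ℂ)) * star P) *
      (Q * diagonal (fun j => (b j : ℂ)) * star Q) =
      P * (diagonal (fun i => (a i : ℂ)) * N * diagonal (fun j => (b j : ℂ)) * star N) *
        star P := by
    simp only [N, star_mul, star_star, Matrix.mul_assoc, hP.2, Matrix.mul_one]
  rw [hcycle, trace_mul_cycle, hP.1, Matrix.one_mul, trace]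
  push_cast
  refine Finset.sum_congr rfl fun i _ => ?_
  rw [diag_apply, mul_apply]
  refine Finset.sum_congr rfl fun j _ => ?_
  rw [mul_diagonal, diagonal_mul, star_apply, Complex.star_def, Complex.normSq_eq_conj_mul_self]
  ring

lemma IsHermitian.eq_conj_diagonal_eigenvalues {A : Matrix n n ℂ} (hA : A.IsHermitian) :
    A = (hA.eigenvectorUnitary : Matrix n n ℂ) * diagonal (fun i => (hA.eigenvalues i : ℂ)) *
      star (hA.eigenvectorUnitary : Matrix n n ℂ) :=
  hA.spectral_theorem

open Polynomial in
lemma IsHermitian.sum_comp_eigenvalues_of_eq_conj {A V : Matrix n n ℂ} (hA : A.IsHermitian)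
    (hV : V ∈ unitaryGroup n ℂ) {d : n → ℝ} (h : A = V * diagonal (fun i => (d i : ℂ)) * star V)
    (g : ℝ → ℝ) : ∑ i, g (hA.eigenvalues i) = ∑ i, g (d i) := by
  have hroots : A.charpoly.roots = Finset.univ.val.map (fun i => (d i : ℂ)) := by
    rw [h, charpoly_mul_comm, ← Matrix.mul_assoc, hV.1, Matrix.one_mul, charpoly_diagonal,
      roots_prod]
    · simp
    · simp [Finset.prod_ne_zero_iff, X_sub_C_ne_zero]
  have hmap : Finset.univ.val.map hA.eigenvalues = Finset.univ.val.map d := by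
    apply Multiset.map_injective Complex.ofReal_injective
    simpa [Multiset.map_map, ← hroots] using hA.roots_charpoly_eq_eigenvalues.symm
  simpa [Multiset.map_map] using congrArg (fun s => (s.map g).sum) hmap

end Matrix

section GibbsState

open Matrix

variable {n : Type*} [Fintype n] [DecidableEq n]

lemma mexp_eq_conj (β : ℝ) {K : Matrix n n ℂ} (hK : K.IsHermitian) :
    mexp β K = (hK.eigenvectorUnitary : Matrix n n ℂ) *
      diagonal (fun i => (exp (-β * hK.eigenvalues i) : ℂ)) *
        star (hK.eigenvectorUnitary : Matrix n n ℂ) := by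
  have hsmul : (-β : ℂ) • K = (hK.eigenvectorUnitary : Matrix n n ℂ) *
      diagonal (fun i => ((-β * hK.eigenvalues i : ℝ) : ℂ)) *
        star (hK.eigenvectorUnitary : Matrix n n ℂ) := by
    conv_lhs => rw [hK.eq_conj_diagonal_eigenvalues]
    rw [← smul_mul_assoc, ← mul_smul_comm, ← diagonal_smul]
    congr 3
    ext i
    simp
  rw [mexp, hsmul]
  refine (Matrix.exp_units_conj (Unitary.toUnits hK.eigenvectorUnitary) _).trans ?_
  rw [exp_diagonal]
  congr 3
  ext i
  simp [Complex.ofReal_exp, Complex.exp_eq_exp_ℂ]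

lemma gibbs_eq_conj (β : ℝ) {K : Matrix n n ℂ} (hK : K.IsHermitian) :
    gibbs β K = (hK.eigenvectorUnitary : Matrix n n ℂ) *
      diagonal (fun i => (gibbsWeights β hK.eigenvalues i : ℂ)) *
        star (hK.eigenvectorUnitary : Matrix n n ℂ) := by
  rw [gibbs, mexp_eq_conj β hK, trace_conj_diagonal hK.eigenvectorUnitary.2, ← smul_mul_assoc,
    ← mul_smul_comm, ← diagonal_smul]
  congr 3
  ext i
  simp [gibbsWeights, div_eq_inv_mul]

lemma posSemidef_gibbs (β : ℝ) {K : Matrix n n ℂ} (hK : K.IsHermitian) :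
    (gibbs β K).PosSemidef := by
  rw [gibbs_eq_conj β hK]
  refine (posSemidef_diagonal_iff.2 fun i => ?_).mul_mul_conjTranspose_same _
  exact Complex.zero_le_real.2 <|
    div_nonneg (exp_pos _).le (Finset.sum_nonneg fun _ _ => (exp_pos _).le)

lemma trace_gibbs [Nonempty n] (β : ℝ) {K : Matrix n n ℂ} (hK : K.IsHermitian) :
    trace (gibbs β K) = 1 := by
  rw [gibbs_eq_conj β hK, trace_conj_diagonal hK.eigenvectorUnitary.2]
  exact_mod_cast sum_gibbsWeights β hK.eigenvalues

lemma vnEntropy_conj_unitary {ρ U : Matrix n n ℂ} (hU : U ∈ unitaryGroup n ℂ)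
    (hρ : ρ.IsHermitian) (hconj : (U * ρ * star U).IsHermitian) :
    vnEntropy hconj = vnEntropy hρ := by
  have hdecomp : U * ρ * star U = (U * hρ.eigenvectorUnitary) *
      diagonal (fun i => (hρ.eigenvalues i : ℂ)) * star (U * hρ.eigenvectorUnitary) := by
    conv_lhs => rw [hρ.eq_conj_diagonal_eigenvalues]
    simp only [star_mul, Matrix.mul_assoc]
  rw [vnEntropy, vnEntropy, hconj.sum_comp_eigenvalues_of_eq_conj
    (mul_mem hU hρ.eigenvectorUnitary.2) hdecomp fun x => x * log x]

lemma freeEnergy_gibbs [Nonempty n] {β : ℝ} (hβ : β ≠ 0) {K : Matrix n n ℂ} (hK : K.IsHermitian)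
    (h : (gibbs β K).IsHermitian) :
    freeEnergy β (gibbs β K) K h = -log (∑ i, exp (-β * hK.eigenvalues i)) / β := by
  set V := (hK.eigenvectorUnitary : Matrix n n ℂ)
  have hV : V ∈ unitaryGroup n ℂ := hK.eigenvectorUnitary.2
  have hentropy : vnEntropy h =
      -∑ i, gibbsWeights β hK.eigenvalues i * log (gibbsWeights β hK.eigenvalues i) := by
    rw [vnEntropy, h.sum_comp_eigenvalues_of_eq_conj hV (gibbs_eq_conj β hK) fun x => x * log x]
  have henergy : trR (gibbs β K * K) = ∑ i, gibbsWeights β hK.eigenvalues i * hK.eigenvalues i := by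
    rw [gibbs_eq_conj β hK]
    conv_lhs => arg 1; arg 2; rw [hK.eq_conj_diagonal_eigenvalues]
    rw [trR, trace_conj_diagonal_mul_conj_diagonal hV, Complex.ofReal_re, hV.1]
    simp [one_apply, apply_ite]
  rw [freeEnergy, hentropy, henergy, sub_eq_add_neg, ← neg_div, neg_neg]
  exact sum_gibbsWeights_mul_add_sum_mul_log_div hβ _

lemma neg_log_sum_exp_div_le_freeEnergy [Nonempty n] {β : ℝ} (hβ : 0 < β) {K ρ : Matrix n n ℂ}
    (hK : K.IsHermitian) (hρ : ρ.IsHermitian) (hpos : ρ.PosSemidef) (htr : trace ρ = 1) :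
    -log (∑ i, exp (-β * hK.eigenvalues i)) / β ≤ freeEnergy β ρ K hρ := by
  set W := (hρ.eigenvectorUnitary : Matrix n n ℂ)
  set V := (hK.eigenvectorUnitary : Matrix n n ℂ)
  have henergy : trR (ρ * K) = ∑ i, ∑ j, hρ.eigenvalues i * hK.eigenvalues j *
      (star W * V).map Complex.normSq i j := by
    conv_lhs => rw [hρ.eq_conj_diagonal_eigenvalues, hK.eq_conj_diagonal_eigenvalues]
    rw [trR, trace_conj_diagonal_mul_conj_diagonal hρ.eigenvectorUnitary.2, Complex.ofReal_re]
    rfl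
  have hsum : ∑ i, hρ.eigenvalues i = 1 := by
    exact_mod_cast (by simpa [htr] using hρ.trace_eq_sum_eigenvalues.symm :
      ∑ i, (hρ.eigenvalues i : ℂ) = 1)
  rw [freeEnergy, henergy, vnEntropy, sub_eq_add_neg, ← neg_div, neg_neg]
  exact neg_log_sum_exp_div_le hβ _ (hρ.posSemidef_iff_eigenvalues_nonneg.1 hpos) hsum
    (map_normSq_mem_doublyStochastic (mul_mem (Unitary.star_mem hρ.eigenvectorUnitary.2)
      hK.eigenvectorUnitary.2))

end GibbsState

/-- Key step of Theorem 1: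
`Tr(ω_H H) - Tr(U ω_H U† H') ≤ F(ω_H, H) - F(ω_{H'}, H')`. -/
theorem key_step_theorem_one (β : ℝ) (hβ : 0 < β) (H H' U : Matrix n n ℂ)
    (hH : H.IsHermitian) (hH' : H'.IsHermitian) (hU : U ∈ Matrix.unitaryGroup n ℂ)
    (h1 : (gibbs β H).IsHermitian) (h2 : (gibbs β H').IsHermitian) :
    trR (gibbs β H * H) - trR ((U * gibbs β H * star U) * H') ≤
      freeEnergy β (gibbs β H) H h1 - freeEnergy β (gibbs β H') H' h2 := by
  rcases isEmpty_or_nonempty n with _ | _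
  · simp [trR, freeEnergy, vnEntropy, Matrix.trace]
  have hpos : (U * gibbs β H * star U).PosSemidef :=
    (posSemidef_gibbs β hH).mul_mul_conjTranspose_same U
  have htr : trace (U * gibbs β H * star U) = 1 := by
    rw [trace_mul_cycle, hU.1, Matrix.one_mul, trace_gibbs β hH]
  have hvar := neg_log_sum_exp_div_le_freeEnergy hβ hH' hpos.isHermitian hpos htr
  rw [freeEnergy, vnEntropy_conj_unitary hU h1] at hvar
  rw [freeEnergy_gibbs hβ.ne' hH' h2, freeEnergy]
  linarith
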